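/- Let 𝒩 be the semidirect product ℤ³ ⋊_φ ℤ², where φ : ℤ² → GL₃(ℤ) sends (1,0) to I₃ + E₁₃ and (0,1) to I₃ + E₂₃. Then 𝒩 admits a condensed positive cone: there exists a positive cone P of 𝒩 such that for every finite subset F ⊆ P there exists g ∈ 𝒩 with g⁻¹Pg ≠ P and F ⊆ g⁻¹Pg. (Equivalently, E_lo(𝒩) is not smooth.) -/

import Mathlib

/-!
Order `ℤ²` by `v ↦ v₀ + √2 v₁`, `ℤ³` lexicographically by `w ↦ (w₀ + √2 w₁, w₂)`, and `𝒩`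
lexicographically along `1 → ℤ³ → 𝒩 → ℤ² → 1`. Conjugation by `r ∈ ℤ²` fixes the `ℤ²`-part
and shears `ℤ³`, shifting the first key of `w` by `w₂ (r₀ + √2 r₁)`. As `r₀ + √2 r₁` takes
arbitrarily small positive values, a suitable conjugate of the cone still contains any given
finite set of positive elements, yet differs from the cone: an element with `w₂ = -1` and first
key below the shift changes sign.
-/

/-- A positive cone of a group `G`: a subsemigroup `P` such that `G` is the disjoint
union of `P`, `P⁻¹` and `{1}`. -/
def IsPositiveCone {G : Type*} [Group G] (P : Set G) : Prop :=
  (∀ a ∈ P, ∀ b ∈ P, a * b ∈ P) ∧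
  (∀ g : G, g ∈ P ∨ g⁻¹ ∈ P ∨ g = 1) ∧
  (∀ g ∈ P, g⁻¹ ∉ P) ∧
  (1 : G) ∉ P

/-- The conjugate `g⁻¹ P g` of a subset `P` of a group. -/
def conjCone {G : Type*} [Group G] (g : G) (P : Set G) : Set G :=
  (fun p => g⁻¹ * p * g) '' P

/-- A positive cone is condensed (for the conjugation action) if every finite subset
of it is contained in some conjugate of `P` different from `P`. -/
def IsCondensedCone {G : Type*} [Group G] (P : Set G) : Prop :=
  ∀ F : Finset G, ↑F ⊆ P → ∃ g : G, conjCone g P ≠ P ∧ ↑F ⊆ conjCone g P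

open Function Filter Topology Multiplicative SemidirectProduct

section PositiveCone

variable {G H : Type*} [Group G] [Group H]

theorem mem_conjCone {g x : G} {P : Set G} : x ∈ conjCone g P ↔ g * x * g⁻¹ ∈ P := by
  constructor
  · rintro ⟨p, hp, rfl⟩
    simpa [mul_assoc] using hp
  · exact fun hx => ⟨_, hx, by group⟩

theorem isPositiveCone_one_lt [LinearOrder H] [MulLeftStrictMono H] :
    IsPositiveCone {h : H | 1 < h} := by
  refine ⟨fun a ha b hb => ?_, fun h => ?_, fun h hh hinv => ?_, lt_irrefl 1⟩
  · exact ha.trans (lt_mul_of_one_lt_right' a hb)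
  · rcases lt_trichotomy h 1 with h1 | rfl | h1
    · exact .inr (.inl (one_lt_inv'.2 h1))
    · exact .inr (.inr rfl)
    · exact .inl h1
  · exact (one_lt_inv'.1 hinv).not_gt hh

theorem IsPositiveCone.preimage {Q : Set H} (hQ : IsPositiveCone Q) {f : G →* H}
    (hf : Injective f) : IsPositiveCone (f ⁻¹' Q) := by
  obtain ⟨hmul, htri, hasymm, hone⟩ := hQ
  refine ⟨fun a ha b hb => ?_, fun g => ?_, fun g hg hinv => ?_, ?_⟩
  · simpa using hmul _ ha _ hb
  · rcases htri (f g) with h | h | h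
    · exact .inl h
    · exact .inr (.inl (by simpa using h))
    · exact .inr (.inr (hf (by simpa using h)))
  · exact hasymm _ hg (by simpa using hinv)
  · simpa using hone

def lexCone {N : Type*} [Group N] (i : N →* G) (f : G →* H) (Q : Set H) (R : Set N) : Set G :=
  f ⁻¹' Q ∪ i '' R

theorem IsPositiveCone.lexCone {N : Type*} [Group N] {Q : Set H} {R : Set N}
    (hQ : IsPositiveCone Q) (hR : IsPositiveCone R) {i : N →* G} {f : G →* H}
    (hi : Injective i) (hexact : i.range = f.ker) : IsPositiveCone (lexCone i f Q R) := by
  have hfi (n : N) : f (i n) = 1 := by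
    rw [← MonoidHom.mem_ker, ← hexact]
    exact ⟨n, rfl⟩
  obtain ⟨hQmul, hQtri, hQasymm, hQone⟩ := hQ
  obtain ⟨hRmul, hRtri, hRasymm, hRone⟩ := hR
  refine ⟨?_, fun g => ?_, ?_, ?_⟩
  · rintro a (ha | ⟨m, hm, rfl⟩) b (hb | ⟨n, hn, rfl⟩)
    · exact .inl (by simpa using hQmul _ ha _ hb)
    · exact .inl (by simpa [hfi] using ha)
    · exact .inl (by simpa [hfi] using hb)
    · exact .inr ⟨m * n, hRmul _ hm _ hn, map_mul i m n⟩
  · rcases hQtri (f g) with h | h | h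
    · exact .inl (.inl h)
    · exact .inr (.inl (.inl (by simpa using h)))
    · obtain ⟨n, rfl⟩ : g ∈ i.range := hexact ▸ h
      rcases hRtri n with hn | hn | rfl
      · exact .inl (.inr ⟨n, hn, rfl⟩)
      · exact .inr (.inl (.inr ⟨n⁻¹, hn, map_inv i n⟩))
      · exact .inr (.inr (map_one i))
  · rintro g (hg | ⟨m, hm, rfl⟩) (hinv | ⟨n, hn, hn'⟩)
    · exact hQasymm _ hg (by simpa using hinv)
    · have : f g = 1 := by simpa [hfi] using congrArg f hn'
      exact hQone (this ▸ hg)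
    · exact hQone (by simpa [hfi] using hinv)
    · obtain rfl : n = m⁻¹ := hi (by simpa using hn')
      exact hRasymm _ hm hn
  · rintro (h | ⟨n, hn, hn1⟩)
    · exact hQone (by simpa using h)
    · exact hRone (hi (hn1.trans (map_one i).symm) ▸ hn)

end PositiveCone

namespace SemidirectProduct

section

variable {N H : Type*} [Group N] [Group H] {φ : H →* MulAut N}

theorem mem_lexCone {Q : Set H} {R : Set N} {x : N ⋊[φ] H} :
    x ∈ lexCone inl rightHom Q R ↔ x.right ∈ Q ∨ x.right = 1 ∧ x.left ∈ R := by
  constructor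
  · rintro (h | ⟨n, hn, rfl⟩)
    · exact .inl h
    · exact .inr ⟨rfl, hn⟩
  · rintro (h | ⟨h1, hR⟩)
    · exact .inl h
    · exact .inr ⟨x.left, hR, SemidirectProduct.ext rfl h1.symm⟩

theorem inr_mul_mul_inv_inr (h : H) (x : N ⋊[φ] H) :
    inr h * x * (inr h)⁻¹ = ⟨φ h x.left, h * x.right * h⁻¹⟩ := by
  ext <;> simp

end

variable {N H : Type*} [Group N] [CommGroup H] {φ : H →* MulAut N}

theorem conjCone_inr_lexCone (h : H) (Q : Set H) (R : Set N) :
    conjCone (inr h) (lexCone inl rightHom Q R : Set (N ⋊[φ] H)) =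
      lexCone inl rightHom Q (φ h ⁻¹' R) := by
  ext x
  simp [mem_conjCone, inr_mul_mul_inv_inr, mem_lexCone, mul_inv_cancel_comm]

theorem isCondensedCone_lexCone {Q : Set H} {R : Set N} (hQ : (1 : H) ∉ Q)
    (hR : ∀ F : Set N, F.Finite → F ⊆ R → ∃ h, ¬R ⊆ φ h ⁻¹' R ∧ F ⊆ φ h ⁻¹' R) :
    IsCondensedCone (lexCone inl rightHom Q R : Set (N ⋊[φ] H)) := by
  intro F hF
  have hFR : inl ⁻¹' (F : Set (N ⋊[φ] H)) ⊆ R := fun n hn => by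
    simpa [mem_lexCone, hQ] using hF hn
  obtain ⟨h, hRh, hFh⟩ := hR _ (F.finite_toSet.preimage inl_injective.injOn) hFR
  obtain ⟨n, hn, hnh⟩ := Set.not_subset.1 hRh
  refine ⟨inr h, fun heq => hnh ?_, fun x hx => ?_⟩
  · have : inl n ∈ (lexCone inl rightHom Q R : Set (N ⋊[φ] H)) := .inr ⟨n, hn, rfl⟩
    rw [← heq, conjCone_inr_lexCone] at this
    simpa [mem_lexCone, hQ] using this
  · rw [conjCone_inr_lexCone, mem_lexCone]
    rcases mem_lexCone.1 (hF hx) with hxQ | ⟨hx1, -⟩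
    · exact .inl hxQ
    · refine .inr ⟨hx1, hFh ?_⟩
      have : x = inl x.left := SemidirectProduct.ext rfl hx1
      simpa [← this] using hx

end SemidirectProduct

theorem MonoidHom.ext_ofAdd_single {ι M : Type*} [Finite ι] [DecidableEq ι] [Group M]
    {f g : Multiplicative (ι → ℤ) →* M}
    (h : ∀ i, f (ofAdd (Pi.single i 1)) = g (ofAdd (Pi.single i 1))) : f = g := by
  suffices ∀ v, f (ofAdd v) = g (ofAdd v) from MonoidHom.ext fun v => this v.toAdd
  intro v
  induction v using Pi.single_induction with
  | zero => simp
  | add u v hu hv => simp only [ofAdd_add, map_mul, hu, hv]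
  | single i m =>
    have hm : (Pi.single i m : ι → ℤ) = m • Pi.single i 1 := by
      rw [← Pi.single_smul, smul_eq_mul, mul_one]
    rw [hm, ofAdd_zsmul, map_zpow, map_zpow, h]

/-- The action `r ↦ I₃ + r₀ E₁₃ + r₁ E₂₃` of `ℤ²` on `ℤ³`. -/
def shear : Multiplicative (Fin 2 → ℤ) →* MulAut (Multiplicative (Fin 3 → ℤ)) where
  toFun r :=
    { toFun := fun w => ofAdd (w.toAdd + w.toAdd 2 • ![r.toAdd 0, r.toAdd 1, 0])
      invFun := fun w => ofAdd (w.toAdd - w.toAdd 2 • ![r.toAdd 0, r.toAdd 1, 0])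
      left_inv := fun w => toAdd.injective <| funext fun i => by
        fin_cases i <;> simp [Matrix.vecHead, Matrix.vecTail]
      right_inv := fun w => toAdd.injective <| funext fun i => by
        fin_cases i <;> simp [Matrix.vecHead, Matrix.vecTail]
      map_mul' := fun w w' => toAdd.injective <| funext fun i => by
        fin_cases i <;> simp [Matrix.vecHead, Matrix.vecTail] <;> ring }
  map_one' := MulEquiv.ext fun w => toAdd.injective <| funext fun i => by
    fin_cases i <;> simp [Matrix.vecHead, Matrix.vecTail]
  map_mul' := fun r s => MulEquiv.ext fun w => toAdd.injective <| funext fun i => by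
    fin_cases i <;> simp [Matrix.vecHead, Matrix.vecTail] <;> ring

theorem toAdd_shear_apply (r : Multiplicative (Fin 2 → ℤ)) (w : Multiplicative (Fin 3 → ℤ)) :
    (shear r w).toAdd = w.toAdd + w.toAdd 2 • ![r.toAdd 0, r.toAdd 1, 0] :=
  rfl

theorem eq_shear (φ : Multiplicative (Fin 2 → ℤ) →* MulAut (Multiplicative (Fin 3 → ℤ)))
    (hφ1 : ∀ w : Fin 3 → ℤ,
      (φ (ofAdd (Pi.single 0 1)) (ofAdd w)).toAdd =
        ((1 : Matrix (Fin 3) (Fin 3) ℤ) + Matrix.single 0 2 1).mulVec w)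
    (hφ2 : ∀ w : Fin 3 → ℤ,
      (φ (ofAdd (Pi.single 1 1)) (ofAdd w)).toAdd =
        ((1 : Matrix (Fin 3) (Fin 3) ℤ) + Matrix.single 1 2 1).mulVec w) :
    φ = shear := by
  refine MonoidHom.ext_ofAdd_single <| Fin.forall_fin_two.2 ⟨?_, ?_⟩ <;>
    refine MulEquiv.ext fun w => toAdd.injective <| funext fun j => ?_ <;>
    obtain ⟨w, rfl⟩ := ofAdd.surjective w
  · rw [hφ1]
    fin_cases j <;> simp [toAdd_shear_apply, Matrix.mulVec, dotProduct, Fin.sum_univ_three,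
      Matrix.one_apply, Matrix.single]
  · rw [hφ2]
    fin_cases j <;> simp [toAdd_shear_apply, Matrix.mulVec, dotProduct, Fin.sum_univ_three,
      Matrix.one_apply, Matrix.single]

section Forms

variable {θ : ℝ}

@[simps]
def linForm (θ : ℝ) : (Fin 2 → ℤ) →+ ℝ where
  toFun v := v 0 + θ * v 1
  map_zero' := by simp
  map_add' v w := by simp only [Pi.add_apply, Int.cast_add]; ring

def lexForm (θ : ℝ) : (Fin 3 → ℤ) →+ ℝ ×ₗ ℤ where
  toFun w := toLex (w 0 + θ * w 1, w 2)
  map_zero' := by simp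
  map_add' w w' := by
    rw [← toLex_add]
    refine congrArg toLex (Prod.ext ?_ rfl)
    push_cast [Pi.add_apply, Prod.fst_add]
    ring

theorem linForm_injective (hθ : Irrational θ) : Injective (linForm θ) := by
  refine (injective_iff_map_eq_zero _).2 fun v hv => ?_
  have hv : (v 0 : ℝ) + v 1 * θ = 0 := by rw [mul_comm]; exact hv
  have h1 : v 1 = 0 := by
    by_contra h
    exact ((hθ.intCast_mul h).intCast_add (v 0)).ne_zero hv
  have h0 : v 0 = 0 := by simpa [h1] using hv
  ext i; fin_cases i <;> assumption

theorem lexForm_injective (hθ : Irrational θ) : Injective (lexForm θ) := by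
  refine (injective_iff_map_eq_zero _).2 fun w hw => ?_
  have h01 : linForm θ ![w 0, w 1] = 0 ∧ w 2 = 0 := by simpa [lexForm, linForm] using hw
  have h01' := (injective_iff_map_eq_zero _).1 (linForm_injective hθ) _ h01.1
  ext i; fin_cases i
  · exact congrFun h01' 0
  · exact congrFun h01' 1
  · exact h01.2

theorem exists_linForm_mem_Ioo (hθ : Irrational θ) {ε : ℝ} (hε : 0 < ε) :
    ∃ v, linForm θ v ∈ Set.Ioo 0 ε := by
  obtain ⟨n, hn⟩ := exists_nat_one_div_lt hε
  obtain ⟨j, k, hk, -, hjk⟩ := Real.exists_int_int_abs_mul_sub_le θ n.succ_pos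
  have hv : linForm θ ![-j, k] ≠ 0 := fun h => by
    simpa [hk.ne'] using congrFun ((injective_iff_map_eq_zero _).1 (linForm_injective hθ) _ h) 1
  have hlt : |linForm θ ![-j, k]| < ε := calc
    |linForm θ ![-j, k]| = |k * θ - j| := by simp [sub_eq_neg_add, mul_comm]
    _ ≤ 1 / ((n.succ : ℕ) + 1) := hjk
    _ ≤ 1 / (n + 1) := by gcongr; linarith
    _ < ε := hn
  rcases hv.lt_or_gt with hneg | hpos
  · exact ⟨-![-j, k], by rw [map_neg]; exact ⟨neg_pos.2 hneg, (neg_le_abs _).trans_lt hlt⟩⟩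
  · exact ⟨_, hpos, (le_abs_self _).trans_lt hlt⟩

theorem toLex_pos_iff {α β : Type*} [Zero α] [Zero β] [LT α] [LT β] {a : α} {b : β} :
    0 < toLex (a, b) ↔ 0 < a ∨ 0 = a ∧ 0 < b :=
  Prod.Lex.toLex_lt_toLex

theorem eventually_pos_toLex_add_mul {a : ℝ} {n : ℤ} (h : 0 < toLex (a, n)) :
    ∀ᶠ δ in 𝓝[>] 0, 0 < toLex (a + n * δ, n) := by
  simp only [toLex_pos_iff] at h ⊢
  rcases h with ha | ⟨rfl, hn⟩
  · have hlim : Tendsto (fun δ : ℝ => a + n * δ) (𝓝 0) (𝓝 a) :=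
      Continuous.tendsto' (by fun_prop) 0 a (by simp)
    filter_upwards [eventually_nhdsWithin_of_eventually_nhds (hlim.eventually (lt_mem_nhds ha))]
      with δ hδ using .inl hδ
  · filter_upwards [self_mem_nhdsWithin] with δ hδ
    exact .inl (by simpa using mul_pos (Int.cast_pos.2 hn) hδ)

theorem lexForm_shear (r : Multiplicative (Fin 2 → ℤ)) (w : Multiplicative (Fin 3 → ℤ)) :
    lexForm θ (shear r w).toAdd =
      toLex (w.toAdd 0 + θ * w.toAdd 1 + w.toAdd 2 * linForm θ r.toAdd, w.toAdd 2) := by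
  refine congrArg toLex (Prod.ext ?_ ?_)
  · change ((w.toAdd 0 + w.toAdd 2 * r.toAdd 0 : ℤ) : ℝ) +
      θ * (w.toAdd 1 + w.toAdd 2 * r.toAdd 1 : ℤ) = _
    push_cast [linForm_apply]
    ring
  · simp [toAdd_shear_apply]

def baseCone (θ : ℝ) : Set (Multiplicative (Fin 2 → ℤ)) :=
  (linForm θ).toMultiplicative ⁻¹' {x | 1 < x}

def fiberCone (θ : ℝ) : Set (Multiplicative (Fin 3 → ℤ)) :=
  (lexForm θ).toMultiplicative ⁻¹' {x | 1 < x}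

theorem mem_fiberCone {w : Multiplicative (Fin 3 → ℤ)} :
    w ∈ fiberCone θ ↔ 0 < lexForm θ w.toAdd :=
  Iff.rfl

theorem isPositiveCone_baseCone (hθ : Irrational θ) : IsPositiveCone (baseCone θ) :=
  isPositiveCone_one_lt.preimage <|
    ofAdd.injective.comp ((linForm_injective hθ).comp toAdd.injective)

theorem isPositiveCone_fiberCone (hθ : Irrational θ) : IsPositiveCone (fiberCone θ) :=
  isPositiveCone_one_lt.preimage <|
    ofAdd.injective.comp ((lexForm_injective hθ).comp toAdd.injective)

theorem exists_shear_not_subset_and_subset (hθ : Irrational θ)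
    {F : Set (Multiplicative (Fin 3 → ℤ))} (hF : F.Finite) (hFR : F ⊆ fiberCone θ) :
    ∃ h, ¬fiberCone θ ⊆ shear h ⁻¹' fiberCone θ ∧ F ⊆ shear h ⁻¹' fiberCone θ := by
  have hev : ∀ᶠ δ in 𝓝[>] 0, ∀ w ∈ F,
      0 < toLex (w.toAdd 0 + θ * w.toAdd 1 + w.toAdd 2 * δ, w.toAdd 2) :=
    hF.eventually_all.2 fun w hw => eventually_pos_toLex_add_mul (hFR hw)
  obtain ⟨ε, hε, hεF⟩ := mem_nhdsGT_iff_exists_Ioo_subset.1 hev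
  obtain ⟨r, hr⟩ := exists_linForm_mem_Ioo hθ hε
  obtain ⟨v, hv⟩ := exists_linForm_mem_Ioo hθ hr.1
  refine ⟨ofAdd r, fun hsub => ?_, fun w hw => ?_⟩
  · have hw : ofAdd ![v 0, v 1, -1] ∈ fiberCone θ := by
      simpa [mem_fiberCone, lexForm, toLex_pos_iff] using hv.1
    have hsw := hsub hw
    simp only [Set.mem_preimage, mem_fiberCone, lexForm_shear, toLex_pos_iff, toAdd_ofAdd,
      Matrix.cons_val, Int.cast_neg, Int.cast_one] at hsw
    rcases hsw with h | ⟨-, h⟩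
    · linarith [hv.2, linForm_apply θ v]
    · exact absurd h (by norm_num)
  · rw [Set.mem_preimage, mem_fiberCone, lexForm_shear]
    exact hεF hr w hw

end Forms

/-- The semidirect product `ℤ³ ⋊_φ ℤ²`, where `φ` sends `(1,0)` to `I₃ + E₁₃` and `(0,1)`
to `I₃ + E₂₃` (acting on `ℤ³` by matrix-vector multiplication), admits a condensed
positive cone. -/
theorem semidirect_product_has_condensed_cone
    (φ : Multiplicative (Fin 2 → ℤ) →* MulAut (Multiplicative (Fin 3 → ℤ)))
    (hφ1 : ∀ w : Fin 3 → ℤ,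
      (φ (Multiplicative.ofAdd (Pi.single 0 1)) (Multiplicative.ofAdd w)).toAdd =
        ((1 : Matrix (Fin 3) (Fin 3) ℤ) + Matrix.single 0 2 1).mulVec w)
    (hφ2 : ∀ w : Fin 3 → ℤ,
      (φ (Multiplicative.ofAdd (Pi.single 1 1)) (Multiplicative.ofAdd w)).toAdd =
        ((1 : Matrix (Fin 3) (Fin 3) ℤ) + Matrix.single 1 2 1).mulVec w) :
    ∃ P : Set (SemidirectProduct (Multiplicative (Fin 3 → ℤ))
        (Multiplicative (Fin 2 → ℤ)) φ),
      IsPositiveCone P ∧ IsCondensedCone P := by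
  obtain rfl := eq_shear φ hφ1 hφ2
  have hθ : Irrational √2 := irrational_sqrt_two
  refine ⟨lexCone inl rightHom (baseCone √2) (fiberCone √2), ?_, ?_⟩
  · exact (isPositiveCone_baseCone hθ).lexCone (isPositiveCone_fiberCone hθ) inl_injective
      range_inl_eq_ker_rightHom
  · exact isCondensedCone_lexCone (isPositiveCone_baseCone hθ).2.2.2
      fun F hF hFR => exists_shear_not_subset_and_subset hθ hF hFR
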